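/- arXiv:1906.03086 — 2 statements merged into one kernel-verified Lean document; each statement's English description precedes it below -/
import Mathlib

section
/- Let p be a prime, r ≥ 1, and let u = (u_1, …, u_r) ∈ ℤ_p^r be a nonzero tuple with d = min_{1≤i≤r} v_p(u_i). Then for every integer m ≥ d, the Haar probability measure of the set {v = (v_1, …, v_r) ∈ ℤ_p^r : v_p(u_1 v_1 + … + u_r v_r) = m} equals (p − 1) · p^{−(m − d + 1)}. -/
/-!
Fix an index `i` with `‖u i‖ = p^(-d)`. Then `u i` divides every `u j`, so once the coordinates
other than `v i` are fixed the linear form reads `u i * (v i + c)` with `c ∈ ℤ_[p]`. By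
translation invariance every such fibre has the measure of the sphere `‖s‖ = p^(-(m-d))`, which is
`p^(-(m-d)) - p^(-(m-d+1))` because the ball of radius `p^(-j)` is the kernel of
`ℤ_[p] → ZMod (p^j)`, a subgroup of index `p^j`. Fubini over the remaining coordinates concludes.
-/

open MeasureTheory MvPolynomial
open scoped ENNReal

/-- The Borel σ-algebra on the `p`-adic integers. -/
noncomputable instance (p : ℕ) [Fact p.Prime] : MeasurableSpace ℤ_[p] := borel _

instance (p : ℕ) [Fact p.Prime] : BorelSpace ℤ_[p] := ⟨rfl⟩

/-- The Haar probability measure on `ℤ_[p]` (normalized so that `ℤ_[p]` has measure 1). -/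
noncomputable def padicHaar (p : ℕ) [Fact p.Prime] : Measure ℤ_[p] :=
  Measure.addHaarMeasure ⊤

instance (p : ℕ) [Fact p.Prime] : SigmaFinite (padicHaar p) :=
  Measure.sigmaFinite_addHaarMeasure

/-- The Haar probability measure on `ℤ_[p]^n`, as the product of the Haar probability
measures on the factors. -/
noncomputable def padicPiHaar (p : ℕ) [Fact p.Prime] (n : ℕ) :
    Measure (Fin n → ℤ_[p]) :=
  Measure.pi fun _ => padicHaar p

instance (p : ℕ) [Fact p.Prime] : IsProbabilityMeasure (padicHaar p) :=
  ⟨Measure.addHaarMeasure_self⟩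

instance (p : ℕ) [Fact p.Prime] : (padicHaar p).IsAddLeftInvariant :=
  Measure.isAddLeftInvariant_addHaarMeasure _

namespace PadicInt

variable {p : ℕ} [Fact p.Prime]

theorem dvd_of_norm_le {a b : ℤ_[p]} (h : ‖b‖ ≤ ‖a‖) : a ∣ b := by
  rcases eq_or_ne a 0 with rfl | ha
  · simp_all
  refine ⟨⟨(b : ℚ_[p]) / a, ?_⟩, Subtype.ext ?_⟩
  · rw [norm_div]
    exact div_le_one_of_le₀ h (norm_nonneg _)
  · exact (mul_div_cancel₀ _ (coe_ne_zero.2 ha)).symm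

theorem setOf_norm_le_pow_eq_ker (n : ℕ) :
    {x : ℤ_[p] | ‖x‖ ≤ (p : ℝ) ^ (-n : ℤ)} =
      ((toZModPow n : ℤ_[p] →+* ZMod (p ^ n)) : ℤ_[p] →+ ZMod (p ^ n)).ker := by
  ext x
  exact (norm_le_pow_iff_mem_span_pow x n).trans (by rw [← ker_toZModPow]; rfl)

variable (μ : Measure ℤ_[p]) [μ.IsAddLeftInvariant] [IsProbabilityMeasure μ]

theorem measure_norm_le_pow (n : ℕ) :
    μ {x | ‖x‖ ≤ (p : ℝ) ^ (-n : ℤ)} = (p : ℝ≥0∞) ^ (-n : ℤ) := by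
  set H := ((toZModPow n : ℤ_[p] →+* ZMod (p ^ n)) : ℤ_[p] →+ ZMod (p ^ n)).ker
  have hindex : H.index = p ^ n := by
    rw [AddSubgroup.index_ker, AddMonoidHom.range_eq_top_of_surjective _ (ZMod.ringHom_surjective _),
      AddSubgroup.card_top, Nat.card_zmod]
  have : H.FiniteIndex := ⟨by rw [hindex]; exact pow_ne_zero _ (Fact.out : p.Prime).ne_zero⟩
  have hH : MeasurableSet (H : Set ℤ_[p]) := by
    rw [← setOf_norm_le_pow_eq_ker]
    exact measurableSet_le continuous_norm.measurable measurable_const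
  have := H.index_mul_measure hH μ
  rw [measure_univ, hindex, ← setOf_norm_le_pow_eq_ker] at this
  rw [ENNReal.zpow_neg, zpow_natCast]
  push_cast at this
  exact ENNReal.eq_inv_of_mul_eq_one_left (by rwa [mul_comm])

theorem setOf_norm_eq_pow_eq_diff (n : ℕ) :
    {x : ℤ_[p] | ‖x‖ = (p : ℝ) ^ (-n : ℤ)} =
      {x | ‖x‖ ≤ (p : ℝ) ^ (-n : ℤ)} \ {x | ‖x‖ ≤ (p : ℝ) ^ (-(n + 1 : ℕ) : ℤ)} := by
  ext x
  rw [Set.mem_sdiff, Set.mem_ofPred, Set.mem_ofPred, Set.mem_ofPred,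
    show (-(n + 1 : ℕ) : ℤ) = -n - 1 by push_cast; ring, ← norm_lt_pow_iff_norm_le_pow_sub_one,
    eq_iff_le_not_lt]

theorem measure_norm_eq_pow (n : ℕ) :
    μ {x | ‖x‖ = (p : ℝ) ^ (-n : ℤ)} = ((p : ℝ≥0∞) - 1) * (p : ℝ≥0∞) ^ (-((n : ℤ) + 1)) := by
  have hp : (p : ℝ≥0∞) ≠ 0 := by exact_mod_cast (Fact.out : p.Prime).ne_zero
  have hp' : (p : ℝ≥0∞) ≠ ∞ := ENNReal.natCast_ne_top p
  have hsub : {x : ℤ_[p] | ‖x‖ ≤ (p : ℝ) ^ (-(n + 1 : ℕ) : ℤ)} ⊆ {x | ‖x‖ ≤ (p : ℝ) ^ (-n : ℤ)} :=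
    fun _ hx ↦ hx.trans <| zpow_le_zpow_right₀ (a := (p : ℝ))
      (mod_cast (Fact.out : p.Prime).one_le) (by push_cast; omega)
  have hpow : (p : ℝ≥0∞) ^ (-n : ℤ) = p * p ^ (-((n : ℤ) + 1)) := by
    nth_rw 2 [← zpow_one (p : ℝ≥0∞)]
    rw [← ENNReal.zpow_add hp hp']
    ring_nf
  rw [setOf_norm_eq_pow_eq_diff, measure_sdiff hsub
      (measurableSet_le continuous_norm.measurable measurable_const).nullMeasurableSet
      (measure_ne_top _ _), measure_norm_le_pow, measure_norm_le_pow, hpow,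
    ENNReal.sub_mul fun _ _ ↦ ENNReal.zpow_ne_top hp hp' _, one_mul]
  norm_cast

theorem measure_norm_mul_add_eq_pow {a c : ℤ_[p]} {d : ℕ} (ha : ‖a‖ = (p : ℝ) ^ (-d : ℤ))
    (hac : a ∣ c) (k : ℕ) :
    μ {t | ‖a * t + c‖ = (p : ℝ) ^ (-(d + k : ℕ) : ℤ)} =
      ((p : ℝ≥0∞) - 1) * (p : ℝ≥0∞) ^ (-((k : ℤ) + 1)) := by
  obtain ⟨c, rfl⟩ := hac
  have hp : (p : ℝ) ≠ 0 := mod_cast (Fact.out : p.Prime).ne_zero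
  have hset : {t | ‖a * t + a * c‖ = (p : ℝ) ^ (-(d + k : ℕ) : ℤ)} =
      (· + c) ⁻¹' {s | ‖s‖ = (p : ℝ) ^ (-k : ℤ)} := by
    ext t
    rw [Set.mem_ofPred, Set.mem_preimage, Set.mem_ofPred, ← mul_add, norm_mul, ha,
      show (-(d + k : ℕ) : ℤ) = -d + -k by push_cast; ring, zpow_add₀ hp,
      mul_right_inj' (zpow_ne_zero _ hp)]
  rw [hset, measure_preimage_add_right, measure_norm_eq_pow]

end PadicInt

theorem MeasureTheory.Measure.pi_eq_of_measure_insertNth_eq {n : ℕ} {α : Fin (n + 1) → Type*}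
    [∀ j, MeasurableSpace (α j)] (μ : ∀ j, Measure (α j)) [∀ j, IsProbabilityMeasure (μ j)]
    (i : Fin (n + 1)) {s : Set (∀ j, α j)} (hs : MeasurableSet s) {c : ℝ≥0∞}
    (h : ∀ w : ∀ j, α (i.succAbove j), μ i {t | Fin.insertNth i t w ∈ s} = c) :
    Measure.pi μ s = c := by
  have he := (measurePreserving_piFinSuccAbove μ i).symm
  rw [← he.measure_preimage hs.nullMeasurableSet,
    Measure.prod_apply_symm (hs.preimage he.measurable)]
  simp_rw [Set.preimage_preimage]
  exact (lintegral_congr fun w ↦ h w).trans (by rw [lintegral_const, measure_univ, mul_one])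

theorem measure_level_set_linear_form_general
    (p : ℕ) [Fact p.Prime] (r : ℕ)
    (u : Fin r → ℤ_[p]) (d : ℕ)
    (hd : ∀ i, ‖u i‖ ≤ (p : ℝ) ^ (-(d : ℤ)))
    (hd' : ∃ i, ‖u i‖ = (p : ℝ) ^ (-(d : ℤ)))
    (m : ℕ) (hm : d ≤ m) :
    padicPiHaar p r {v : Fin r → ℤ_[p] | ‖∑ i, u i * v i‖ = (p : ℝ) ^ (-(m : ℤ))} =
      ((p : ℝ≥0∞) - 1) * (p : ℝ≥0∞) ^ (-((m : ℤ) - (d : ℤ) + 1)) := by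
  obtain ⟨i, hi⟩ := hd'
  obtain ⟨k, rfl⟩ := Nat.exists_eq_add_of_le hm
  obtain ⟨n, rfl⟩ := Nat.exists_eq_add_one_of_ne_zero i.pos.ne'
  rw [show -(((d + k : ℕ) : ℤ) - d + 1) = -((k : ℤ) + 1) by push_cast; ring]
  refine Measure.pi_eq_of_measure_insertNth_eq _ i
    (isClosed_eq (by fun_prop) continuous_const).measurableSet fun w ↦ ?_
  simp only [Set.mem_ofPred_eq, Fin.sum_univ_succAbove _ i, Fin.insertNth_apply_same,
    Fin.insertNth_apply_succAbove]
  exact PadicInt.measure_norm_mul_add_eq_pow _ hi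
    (Finset.dvd_sum fun j _ ↦ (PadicInt.dvd_of_norm_le (hi ▸ hd _)).mul_right _) k

/-- for a nonzero `u ∈ ℤ_p^r` with `d = min_i v_p(u_i)` (encoded via the
`p`-adic norm: `‖u i‖ ≤ p^(-d)` for all `i`, with equality for some `i`), for every `m ≥ d`
the Haar measure of `{v ∈ ℤ_p^r : v_p(∑ u_i v_i) = m}` equals `(p-1) p^(-(m-d+1))`.
(The condition `v_p(w) = m` is expressed as `‖w‖ = p^(-m)`.) -/
theorem measure_level_set_linear_form
    (p : ℕ) [Fact p.Prime] (r : ℕ) (hr : 1 ≤ r)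
    (u : Fin r → ℤ_[p]) (hu : u ≠ 0) (d : ℕ)
    (hd : ∀ i, ‖u i‖ ≤ (p : ℝ) ^ (-(d : ℤ)))
    (hd' : ∃ i, ‖u i‖ = (p : ℝ) ^ (-(d : ℤ)))
    (m : ℕ) (hm : d ≤ m) :
    padicPiHaar p r {v : Fin r → ℤ_[p] | ‖∑ i, u i * v i‖ = (p : ℝ) ^ (-(m : ℤ))} =
      ((p : ℝ≥0∞) - 1) * (p : ℝ≥0∞) ^ (-((m : ℤ) - (d : ℤ) + 1)) :=
  measure_level_set_linear_form_general p r u d hd hd' m hm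
end

section
/- Let p be a prime, let f_1, …, f_r ∈ ℤ_p[x_1, …, x_n] be nonzero polynomials, and set g = f_1 y_1 + … + f_r y_r ∈ ℤ_p[x_1, …, x_n, y_1, …, y_r]. Then for every integer m ≥ 0, the Haar probability measure of {(x, v) ∈ ℤ_p^n × ℤ_p^r : v_p(g(x, v)) = m} equals the sum over d = 0, 1, …, m of μ({x ∈ ℤ_p^n : min_{1≤i≤r} v_p(f_i(x)) = d}) · (p − 1) · p^{−(m − d + 1)}. -/
open MeasureTheory MvPolynomial
open scoped ENNReal

/-!
Fix `x`, put `a i = f i x` and pick `i₀` with `‖a i₀‖ = max_i ‖a i‖`. By the ultrametric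
inequality `‖∑ a i * v i‖ ≤ ‖a i₀‖`, so the fibre over `x` is empty unless `‖a i₀‖ = p^(-d)`
with `d ≤ m`. Otherwise integrate first
over `v i₀`: since `a i₀` divides every `a i`, each slice is a translate of
`{t | ‖t‖ = p^(-(m-d))}`, whose measure is `(p-1) p^(-(m-d+1))` because the ball
`{‖t‖ ≤ p^(-k)} = p^k ℤ_p` is an additive subgroup of index `p^k`. Integrating over `x`
(Tonelli) gives the sum.
-/

theorem PadicInt.dvd_of_norm_le_s1 {p : ℕ} [Fact p.Prime] {a c : ℤ_[p]} (h : ‖c‖ ≤ ‖a‖) :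
    a ∣ c := by
  rcases eq_or_ne a 0 with rfl | ha
  · simp_all
  refine ⟨⟨(c : ℚ_[p]) / a, ?_⟩, ?_⟩
  · rw [norm_div]
    exact div_le_one_of_le₀ h (norm_nonneg _)
  · exact PadicInt.ext (mul_div_cancel₀ _ (PadicInt.coe_ne_zero.mpr ha)).symm

theorem PadicInt.norm_sum_mul_le {p : ℕ} [Fact p.Prime] {ι : Type*} (s : Finset ι)
    (a v : ι → ℤ_[p]) {C : ℝ} (hC : 0 ≤ C) (ha : ∀ i ∈ s, ‖a i‖ ≤ C) :
    ‖∑ i ∈ s, a i * v i‖ ≤ C :=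
  IsUltrametricDist.norm_sum_le_of_forall_le_of_nonneg hC fun i hi => by
    rw [norm_mul]
    exact (mul_le_of_le_one_right (norm_nonneg _) (PadicInt.norm_le_one _)).trans (ha i hi)

section PadicHaar

variable (p : ℕ) [Fact p.Prime]

instance : (padicHaar p).IsAddHaarMeasure := Measure.isAddHaarMeasure_addHaarMeasure ⊤

instance : IsProbabilityMeasure (padicHaar p) :=
  ⟨by simpa [padicHaar] using
    Measure.addHaarMeasure_self (K₀ := (⊤ : TopologicalSpace.PositiveCompacts ℤ_[p]))⟩

instance (n : ℕ) : IsProbabilityMeasure (padicPiHaar p n) := by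
  unfold padicPiHaar; infer_instance

theorem PadicInt.index_span_p_pow (k : ℕ) :
    (Ideal.span {(p : ℤ_[p]) ^ k}).toAddSubgroup.index = p ^ k := by
  have h := AddSubgroup.index_ker (PadicInt.toZModPow (p := p) k).toAddMonoidHom
  rw [AddMonoidHom.range_eq_top.mpr (ZMod.ringHom_surjective _), AddSubgroup.card_top,
    Nat.card_zmod] at h
  rw [← PadicInt.ker_toZModPow]
  exact h

theorem padicHaar_setOf_norm_le (k : ℕ) :
    padicHaar p {t | ‖t‖ ≤ (p : ℝ) ^ (-(k : ℤ))} = (p : ℝ≥0∞) ^ (-(k : ℤ)) := by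
  set I := (Ideal.span {(p : ℤ_[p]) ^ k}).toAddSubgroup
  have hB : {t : ℤ_[p] | ‖t‖ ≤ (p : ℝ) ^ (-(k : ℤ))} = I := by
    ext t; exact PadicInt.norm_le_pow_iff_mem_span_pow t k
  have hI : I.index = p ^ k := PadicInt.index_span_p_pow p k
  have : I.FiniteIndex := ⟨by simp [hI, (Fact.out : p.Prime).ne_zero]⟩
  have hmeas : MeasurableSet (I : Set ℤ_[p]) :=
    hB ▸ (isClosed_le continuous_norm continuous_const).measurableSet
  have h := I.index_mul_measure hmeas (padicHaar p)
  rw [hI, measure_univ, Nat.cast_pow] at h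
  rw [hB, ENNReal.zpow_neg, zpow_natCast]
  exact ENNReal.eq_inv_of_mul_eq_one_left (by rwa [mul_comm])

theorem padicHaar_setOf_norm_eq (k : ℕ) :
    padicHaar p {t | ‖t‖ = (p : ℝ) ^ (-(k : ℤ))} =
      ((p : ℝ≥0∞) - 1) * (p : ℝ≥0∞) ^ (-((k : ℤ) + 1)) := by
  have hp : (p : ℝ≥0∞) ≠ 0 := by simp [(Fact.out : p.Prime).ne_zero]
  have hsphere : {t : ℤ_[p] | ‖t‖ = (p : ℝ) ^ (-(k : ℤ))} =
      {t | ‖t‖ ≤ (p : ℝ) ^ (-(k : ℤ))} \ {t | ‖t‖ ≤ (p : ℝ) ^ (-((k + 1 : ℕ) : ℤ))} := by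
    ext t
    have h := PadicInt.norm_le_pow_iff_norm_lt_pow_add_one t (-((k + 1 : ℕ) : ℤ))
    rw [show -((k + 1 : ℕ) : ℤ) + 1 = -(k : ℤ) by push_cast; ring] at h
    simp only [Set.mem_ofPred_eq, Set.mem_sdiff, h, not_lt]
    exact le_antisymm_iff
  rw [hsphere, measure_sdiff _
      (isClosed_le continuous_norm continuous_const).measurableSet.nullMeasurableSet
      (measure_ne_top _ _),
    padicHaar_setOf_norm_le, padicHaar_setOf_norm_le,
    ENNReal.sub_mul fun _ _ => ENNReal.zpow_ne_top hp (by simp) _, one_mul]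
  · congr 1
    calc (p : ℝ≥0∞) ^ (-(k : ℤ)) = (p : ℝ≥0∞) ^ (1 : ℤ) * (p : ℝ≥0∞) ^ (-((k : ℤ) + 1)) := by
          rw [← ENNReal.zpow_add hp (by simp)]; ring_nf
      _ = _ := by rw [zpow_one]
  · intro t (ht : ‖t‖ ≤ _)
    exact ht.trans (zpow_le_zpow_right₀ (by exact_mod_cast (Fact.out : p.Prime).one_le) (by omega))

theorem padicHaar_setOf_norm_mul_add_eq {a c : ℤ_[p]} (ha : a ≠ 0) (hc : ‖c‖ ≤ ‖a‖) (k : ℕ) :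
    padicHaar p {t | ‖a * t + c‖ = ‖a‖ * (p : ℝ) ^ (-(k : ℤ))} =
      ((p : ℝ≥0∞) - 1) * (p : ℝ≥0∞) ^ (-((k : ℤ) + 1)) := by
  obtain ⟨b, rfl⟩ := PadicInt.dvd_of_norm_le_s1 hc
  have hset : {t | ‖a * t + a * b‖ = ‖a‖ * (p : ℝ) ^ (-(k : ℤ))} =
      (fun t => b + t) ⁻¹' {s | ‖s‖ = (p : ℝ) ^ (-(k : ℤ))} := by
    ext t
    rw [Set.mem_ofPred_eq, ← mul_add, norm_mul, add_comm,
      mul_right_inj' (norm_ne_zero_iff.mpr ha)]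
    rfl
  rw [hset, measure_preimage_add, padicHaar_setOf_norm_eq]

theorem padicPiHaar_setOf_norm_sum_mul_eq {r : ℕ} (a : Fin (r + 1) → ℤ_[p]) (i₀ : Fin (r + 1))
    (ha : a i₀ ≠ 0) (hmax : ∀ i, ‖a i‖ ≤ ‖a i₀‖) (k : ℕ) :
    padicPiHaar p (r + 1) {v | ‖∑ i, a i * v i‖ = ‖a i₀‖ * (p : ℝ) ^ (-(k : ℤ))} =
      ((p : ℝ≥0∞) - 1) * (p : ℝ≥0∞) ^ (-((k : ℤ) + 1)) := by
  set T : Set (ℤ_[p] × (Fin r → ℤ_[p])) :=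
    {q | ‖a i₀ * q.1 + ∑ j, a (i₀.succAbove j) * q.2 j‖ = ‖a i₀‖ * (p : ℝ) ^ (-(k : ℤ))}
  have hT : MeasurableSet T := by
    refine (isClosed_eq (Continuous.norm ?_) continuous_const).measurableSet
    fun_prop
  have hpre : {v | ‖∑ i, a i * v i‖ = ‖a i₀‖ * (p : ℝ) ^ (-(k : ℤ))} =
      MeasurableEquiv.piFinSuccAbove (fun _ => ℤ_[p]) i₀ ⁻¹' T := by
    ext v
    simp [T, Fin.sum_univ_succAbove _ i₀, Fin.removeNth]
  rw [hpre, padicPiHaar,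
    (measurePreserving_piFinSuccAbove (fun _ => padicHaar p) i₀).measure_preimage
      hT.nullMeasurableSet, Measure.prod_apply_symm hT]
  have hslice (w : Fin r → ℤ_[p]) :
      padicHaar p ((fun t => (t, w)) ⁻¹' T) = ((p : ℝ≥0∞) - 1) * (p : ℝ≥0∞) ^ (-((k : ℤ) + 1)) :=
    padicHaar_setOf_norm_mul_add_eq p ha
      (PadicInt.norm_sum_mul_le _ _ _ (norm_nonneg _) fun j _ => hmax _) k
  simp [hslice]

open Finset in
theorem padicPiHaar_setOf_norm_sum_mul_eq_sum {r : ℕ} (a : Fin (r + 1) → ℤ_[p]) (m : ℕ) :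
    padicPiHaar p (r + 1) {v | ‖∑ i, a i * v i‖ = (p : ℝ) ^ (-(m : ℤ))} =
      ∑ d ∈ range (m + 1),
        if univ.sup' univ_nonempty (fun i => ‖a i‖) = (p : ℝ) ^ (-(d : ℤ)) then
          ((p : ℝ≥0∞) - 1) * (p : ℝ≥0∞) ^ (-((m : ℤ) - (d : ℤ) + 1))
        else 0 := by
  have hp : (1 : ℝ) < p := by exact_mod_cast (Fact.out : p.Prime).one_lt
  obtain ⟨i₀, -, hsup⟩ := exists_mem_eq_sup' univ_nonempty fun i => ‖a i‖
  have hmax (i : Fin (r + 1)) : ‖a i‖ ≤ ‖a i₀‖ := hsup ▸ le_sup' (fun i => ‖a i‖) (mem_univ i)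
  rw [hsup]
  rcases lt_or_ge ‖a i₀‖ ((p : ℝ) ^ (-(m : ℤ))) with hlt | hge
  · have hempty : {v : Fin (r + 1) → ℤ_[p] | ‖∑ i, a i * v i‖ = (p : ℝ) ^ (-(m : ℤ))} = ∅ :=
      Set.eq_empty_of_forall_notMem fun v hv =>
        (PadicInt.norm_sum_mul_le _ a v (norm_nonneg _) fun i _ => hmax i).not_gt (hv ▸ hlt)
    rw [hempty, measure_empty]
    refine (sum_eq_zero fun d hd => if_neg fun hd' => hlt.not_ge ?_).symm
    rw [hd']
    exact zpow_le_zpow_right₀ hp.le (by simp at hd; omega)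
  · have ha : a i₀ ≠ 0 := norm_pos_iff.mp ((zpow_pos (by linarith) _).trans_le hge)
    have hval := PadicInt.norm_eq_zpow_neg_valuation ha
    obtain ⟨k, rfl⟩ : ∃ k, m = (a i₀).valuation + k := by
      refine Nat.exists_eq_add_of_le ?_
      rw [hval, zpow_le_zpow_iff_right₀ hp] at hge
      omega
    have hnorm : (p : ℝ) ^ (-(((a i₀).valuation + k : ℕ) : ℤ)) = ‖a i₀‖ * (p : ℝ) ^ (-(k : ℤ)) := by
      rw [hval, ← zpow_add₀ (by positivity)]
      push_cast; ring_nf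
    rw [hnorm, padicPiHaar_setOf_norm_sum_mul_eq p a i₀ ha hmax k,
      sum_eq_single_of_mem (a i₀).valuation (by simp)]
    · rw [if_pos hval]
      push_cast; ring_nf
    · intro d _ hd
      refine if_neg fun h => hd ?_
      rw [hval] at h
      simpa using (zpow_right_injective₀ (by positivity) hp.ne' h).symm

end PadicHaar

theorem MvPolynomial.eval_sum_rename_mul_X {R σ ι : Type*} [CommSemiring R] [Fintype ι]
    (f : ι → MvPolynomial σ R) (x : σ → R) (v : ι → R) :
    eval (Sum.elim x v) (∑ i, rename Sum.inl (f i) * X (Sum.inr i)) = ∑ i, eval x (f i) * v i := by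
  simp [eval_rename, Sum.elim_comp_inl]

theorem measure_level_set_g_eq_sum_general
    (p : ℕ) [Fact p.Prime] (n r : ℕ) (hr : 1 ≤ r)
    (f : Fin r → MvPolynomial (Fin n) ℤ_[p])
    (m : ℕ) :
    ((padicPiHaar p n).prod (padicPiHaar p r))
        {z : (Fin n → ℤ_[p]) × (Fin r → ℤ_[p]) |
          ‖eval (Sum.elim z.1 z.2)
              (∑ i, rename Sum.inl (f i) * X (Sum.inr i))‖ = (p : ℝ) ^ (-(m : ℤ))} =
      ∑ d ∈ Finset.range (m + 1),
        padicPiHaar p n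
            {x : Fin n → ℤ_[p] |
              (Finset.univ.sup'
                  (Finset.univ_nonempty_iff.mpr (Fin.pos_iff_nonempty.mp hr))
                  fun i => ‖eval x (f i)‖) = (p : ℝ) ^ (-(d : ℤ))} *
          (((p : ℝ≥0∞) - 1) * (p : ℝ≥0∞) ^ (-((m : ℤ) - (d : ℤ) + 1))) := by
  obtain ⟨r, rfl⟩ := Nat.exists_eq_add_of_le' hr
  simp_rw [MvPolynomial.eval_sum_rename_mul_X]
  have hcont (i : Fin (r + 1)) : Continuous fun x : Fin n → ℤ_[p] => eval x (f i) :=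
    MvPolynomial.continuous_eval _
  set A : ℕ → Set (Fin n → ℤ_[p]) := fun d =>
    {x | (Finset.univ.sup' Finset.univ_nonempty fun i => ‖eval x (f i)‖) = (p : ℝ) ^ (-(d : ℤ))}
  have hA (d : ℕ) : MeasurableSet (A d) :=
    (isClosed_eq (Continuous.finset_sup'_apply _ fun i _ => (hcont i).norm)
      continuous_const).measurableSet
  rw [Measure.prod_apply
    (isClosed_eq (Continuous.norm (by fun_prop)) continuous_const).measurableSet]
  calc _ = ∫⁻ x, ∑ d ∈ Finset.range (m + 1), (A d).indicator
          (fun _ => ((p : ℝ≥0∞) - 1) * (p : ℝ≥0∞) ^ (-((m : ℤ) - (d : ℤ) + 1))) x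
          ∂padicPiHaar p n :=
        lintegral_congr fun x => by
          simp only [Set.indicator_apply, A, Set.mem_ofPred_eq]
          exact padicPiHaar_setOf_norm_sum_mul_eq_sum p (fun i => eval x (f i)) m
    _ = _ := by
      rw [lintegral_finsetSum _ fun d _ => measurable_const.indicator (hA d)]
      exact Finset.sum_congr rfl fun d _ => by rw [lintegral_indicator_const (hA d), mul_comm]

/-- with `g = ∑ f_i y_i ∈ ℤ_p[x_1,…,x_n,y_1,…,y_r]`, for every `m ≥ 0`,
`μ{(x,v) : v_p(g(x,v)) = m} = ∑_{d=0}^m μ{x : min_i v_p(f_i(x)) = d} ⬝ (p-1) p^(-(m-d+1))`.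
The condition `v_p(w) = m` is expressed as `‖w‖ = p^(-m)`, and `min_i v_p(f_i(x)) = d`
as `max_i ‖f_i(x)‖ = p^(-d)`. -/
theorem measure_level_set_g_eq_sum
    (p : ℕ) [Fact p.Prime] (n r : ℕ) (hr : 1 ≤ r)
    (f : Fin r → MvPolynomial (Fin n) ℤ_[p]) (hf : ∀ i, f i ≠ 0)
    (m : ℕ) :
    ((padicPiHaar p n).prod (padicPiHaar p r))
        {z : (Fin n → ℤ_[p]) × (Fin r → ℤ_[p]) |
          ‖eval (Sum.elim z.1 z.2)
              (∑ i, rename Sum.inl (f i) * X (Sum.inr i))‖ = (p : ℝ) ^ (-(m : ℤ))} =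
      ∑ d ∈ Finset.range (m + 1),
        padicPiHaar p n
            {x : Fin n → ℤ_[p] |
              (Finset.univ.sup'
                  (Finset.univ_nonempty_iff.mpr (Fin.pos_iff_nonempty.mp hr))
                  fun i => ‖eval x (f i)‖) = (p : ℝ) ^ (-(d : ℤ))} *
          (((p : ℝ≥0∞) - 1) * (p : ℝ≥0∞) ^ (-((m : ℤ) - (d : ℤ) + 1))) :=
  measure_level_set_g_eq_sum_general p n r hr f m
end
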